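/- The pointwise powers Ω^{⟨0⟩} = 𝟙, Ω^{⟨1⟩}, Ω^{⟨2⟩}, ... of the prime-counting function Ω are linearly independent over ℂ. Concretely, for every n, the value at 1 of the Wronskian determinant det(∂_2^j Ω^{⟨i⟩})_{0≤i,j≤n} with respect to the 2-basic derivation equals (∏_{j=0}^n j!)·det(j^i)_{0≤i,j≤n}, which is nonzero. -/

import Mathlib

open ArithmeticFunction
open scoped Classical

/-- The embedding of `ℂ` into the Dirichlet ring of arithmetic functions,
sending `c` to the function with value `c` at `1` and `0` elsewhere. -/
noncomputable def CC : ℂ →+* ArithmeticFunction ℂ where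
  toFun c := ⟨fun n => if n = 1 then c else 0, by simp⟩
  map_zero' := by ext n; simp
  map_one' := by ext n; simp [ArithmeticFunction.one_apply]
  map_add' a b := by ext n; by_cases h : n = 1 <;> erw [ArithmeticFunction.add_apply] <;> simp [h]
  map_mul' a b := by
    ext n
    erw [ArithmeticFunction.mul_apply]
    by_cases h : n = 1
    · subst h
      rw [show Nat.divisorsAntidiagonal 1 = {(1,1)} from rfl]
      simp
    · rw [Finset.sum_eq_zero]
      · simp [h]
      · rintro ⟨d, e⟩ hde
        rw [Nat.mem_divisorsAntidiagonal] at hde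
        rcases Decidable.eq_or_ne d 1 with hd | hd
        · have : e ≠ 1 := by rintro rfl; exact h (by simp [← hde.1, hd])
          simp [this]
        · simp [hd]

/-- The order `v f` of an arithmetic function: the least element of the support
(`sInf` of the empty set is `0` for `f = 0`; that case is always excluded by hypotheses). -/
noncomputable def ordN (f : ArithmeticFunction ℂ) : ℕ := sInf {n : ℕ | f n ≠ 0}

/-- The order as an extended natural number, `⊤` for `f = 0`. -/
noncomputable def ordE (f : ArithmeticFunction ℂ) : ℕ∞ :=
  sInf ((fun n : ℕ => (n : ℕ∞)) '' {n : ℕ | f n ≠ 0})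

/-- The norm `‖f‖ = 1/v(f)`, with `1/∞ = 0`. -/
noncomputable def nrm (f : ArithmeticFunction ℂ) : ℝ :=
  if f = 0 then 0 else 1 / (ordN f : ℝ)

/-- Extension of an arithmetic function to `ℝ`, vanishing off `ℕ`. -/
noncomputable def extR (f : ArithmeticFunction ℂ) (x : ℝ) : ℂ :=
  if h : ∃ n : ℕ, (n : ℝ) = x then f h.choose else 0

/-- The exponential map `Exp f = exp(f 1) * ∑ (f - f 1)^k / k!` of the Dirichlet ring.
Since `(f - f 1)^k` has order `≥ 2^k`, the value of the infinite series at `n` equals the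
value of the partial sum up to `k = n`. -/
noncomputable def ExpA (f : ArithmeticFunction ℂ) : ArithmeticFunction ℂ :=
  ⟨fun n => Complex.exp (f 1) *
      ((∑ k ∈ Finset.range (n + 1),
        CC ((Nat.factorial k : ℂ)⁻¹) * (f - CC (f 1)) ^ k) n), by simp⟩

/-- The `p`-basic derivation `(∂_p f) n = v_p (n p) • f (n p)`. -/
noncomputable def DP (p : ℕ) (f : ArithmeticFunction ℂ) : ArithmeticFunction ℂ :=
  ⟨fun n => (padicValNat p (n * p) : ℂ) * f (n * p), by simp⟩

/-- The log-derivation `(∂_L f) n = log n * f n`. -/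
noncomputable def DL (f : ArithmeticFunction ℂ) : ArithmeticFunction ℂ :=
  ⟨fun n => (Real.log n : ℂ) * f n, by simp⟩

/-- The pointwise multiplication operator `𝔪_g`. -/
noncomputable def MG (g f : ArithmeticFunction ℂ) : ArithmeticFunction ℂ :=
  ⟨fun n => g n * f n, by simp⟩

/-- Integer powers `𝔪_g^i` of the pointwise multiplication operator:
`(𝔪_g^i f) n = (g n)^i * f n`. -/
noncomputable def MGi (g : ArithmeticFunction ℂ) (i : ℤ) (f : ArithmeticFunction ℂ) :
    ArithmeticFunction ℂ := ⟨fun n => g n ^ i * f n, by simp⟩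

/-- `D` is a (ℂ-linear) derivation of the ring of arithmetic functions
under Dirichlet convolution. -/
def IsDerivationA (D : ArithmeticFunction ℂ → ArithmeticFunction ℂ) : Prop :=
  (∀ f g, D (f + g) = D f + D g) ∧
  (∀ (c : ℂ) (f), D (CC c * f) = CC c * D f) ∧
  (∀ f g, D (f * g) = D f * g + f * D g)

/-- Convergence of a sequence of arithmetic functions in the norm topology. -/
def TendstoA (s : ℕ → ArithmeticFunction ℂ) (l : ArithmeticFunction ℂ) : Prop :=
  Filter.Tendsto (fun m => nrm (s m - l)) Filter.atTop (nhds 0)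

/-- (Sequential) continuity of a map in the norm topology, which for this
ultrametric is equivalent to continuity. -/
def ContinuousA (D : ArithmeticFunction ℂ → ArithmeticFunction ℂ) : Prop :=
  ∀ (s : ℕ → ArithmeticFunction ℂ) (l), TendstoA s l → TendstoA (fun m => D (s m)) (D l)

/-- The indicator function `e_m` of the singleton `{m}`. -/
noncomputable def En (m : ℕ) : ArithmeticFunction ℂ :=
  ⟨fun n => if 0 < n ∧ n = m then 1 else 0, by simp⟩

/-- The constant one arithmetic function `𝟙`. -/
noncomputable def OneA : ArithmeticFunction ℂ := ⟨fun n => if n = 0 then 0 else 1, by simp⟩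

/-- The ℂ-algebra structure of the ring of arithmetic functions, via `CC`. -/
noncomputable instance : Algebra ℂ (ArithmeticFunction ℂ) := CC.toAlgebra

/-- The `i`-th pointwise power `Ω^⟨i⟩ : n ↦ Ω(n)^i` of the prime-counting function `Ω`
(number of prime factors with multiplicity); `Ω^⟨0⟩ = 𝟙`. -/
noncomputable def OmPow (i : ℕ) : ArithmeticFunction ℂ :=
  ⟨fun n => if n = 0 then 0 else ((ArithmeticFunction.cardFactors n : ℕ) : ℂ) ^ i, by simp⟩

open scoped Nat

/-!
A linear relation `∑ cᵢ Ω^⟨i⟩ = 0`, evaluated at `2^j` where `Ω = j`, says that `c` lies in the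
kernel of the Vandermonde matrix `(j^i)` on the distinct nodes `0, …, k`, so `c = 0`. For the
Wronskian, evaluation at `1` is a ring homomorphism and `∂_2^j f (1) = j! f(2^j)`, so the matrix
evaluated at `1` is the Vandermonde matrix with its columns scaled by `j!`.
-/

namespace ArithmeticFunction

noncomputable def evalOne (R : Type*) [CommSemiring R] : ArithmeticFunction R →+* R where
  toFun f := f 1
  map_one' := one_one
  map_zero' := zero_apply
  map_add' _ _ := add_apply
  map_mul' _ _ := mul_apply_one

lemma finset_sum_apply {R ι : Type*} [AddCommMonoid R] (s : Finset ι)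
    (f : ι → ArithmeticFunction R) (n : ℕ) : (∑ i ∈ s, f i) n = ∑ i ∈ s, f i n := by
  induction s using Finset.cons_induction with
  | empty => rfl
  | cons a s ha ih => rw [Finset.sum_cons, Finset.sum_cons, add_apply, ih]

end ArithmeticFunction

lemma CC_apply (c : ℂ) (n : ℕ) : CC c n = if n = 1 then c else 0 := rfl

lemma CC_mul_apply (c : ℂ) (f : ArithmeticFunction ℂ) (n : ℕ) : (CC c * f) n = c * f n := by
  rcases n.eq_zero_or_pos with rfl | hn
  · simp
  rw [mul_apply, Finset.sum_eq_single (1, n)]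
  · simp [CC_apply]
  · rintro ⟨d, e⟩ hde hne
    have hd : d ≠ 1 := by
      rintro rfl
      exact hne (by rw [← (Nat.mem_divisorsAntidiagonal.mp hde).1, one_mul])
    simp [CC_apply, hd]
  · exact fun h => absurd (Nat.mem_divisorsAntidiagonal.mpr ⟨one_mul n, hn.ne'⟩) h

lemma DP_iterate_apply_one (p : ℕ) [Fact p.Prime] (j : ℕ) (f : ArithmeticFunction ℂ) :
    ((DP p)^[j] f) 1 = (j ! : ℂ) * f (p ^ j) := by
  induction j generalizing f with
  | zero => simp
  | succ j ih =>
    rw [Function.iterate_succ_apply, ih]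
    show (j ! : ℂ) * ((padicValNat p (p ^ j * p) : ℂ) * f (p ^ j * p)) = _
    rw [← pow_succ, padicValNat.prime_pow, Nat.factorial_succ]
    push_cast
    ring

lemma OmPow_apply (i n : ℕ) : OmPow i n = if n = 0 then 0 else (cardFactors n : ℂ) ^ i := rfl

lemma OmPow_prime_pow {p : ℕ} (hp : p.Prime) (i j : ℕ) : OmPow i (p ^ j) = (j : ℂ) ^ i := by
  rw [OmPow_apply, if_neg (pow_ne_zero j hp.ne_zero), cardFactors_apply_prime_pow hp]

lemma det_of_natCast_pow_ne_zero (R : Type*) [CommRing R] [IsDomain R] [CharZero R] (n : ℕ) :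
    (Matrix.of fun i j : Fin n => ((j : ℕ) : R) ^ (i : ℕ)).det ≠ 0 := by
  rw [show Matrix.of (fun i j : Fin n => ((j : ℕ) : R) ^ (i : ℕ))
      = (Matrix.vandermonde fun j : Fin n => ((j : ℕ) : R)).transpose from rfl,
    Matrix.det_transpose, Matrix.det_vandermonde_ne_zero_iff]
  exact fun a b h => Fin.val_injective (Nat.cast_injective h)

lemma eq_zero_of_sum_CC_mul_OmPow_eq_zero {k : ℕ} {c : Fin (k + 1) → ℂ}
    (h : ∑ i, CC (c i) * OmPow i = 0) : c = 0 := by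
  refine Matrix.eq_zero_of_vecMul_eq_zero (det_of_natCast_pow_ne_zero ℂ (k + 1))
    (funext fun j => ?_)
  have h2 := congrArg (fun f : ArithmeticFunction ℂ => f (2 ^ (j : ℕ))) h
  simp only [finset_sum_apply, CC_mul_apply, OmPow_prime_pow Nat.prime_two,
    ArithmeticFunction.zero_apply] at h2
  simpa [Matrix.vecMul, dotProduct] using h2

lemma wronskian_OmPow_apply_one (k : ℕ) :
    (Matrix.of fun i j : Fin (k + 1) => (DP 2)^[(j : ℕ)] (OmPow i)).det 1
      = (∏ j ∈ Finset.range (k + 1), (j ! : ℂ)) *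
          (Matrix.of fun i j : Fin (k + 1) => ((j : ℕ) : ℂ) ^ (i : ℕ)).det := by
  have hentries : (Matrix.of fun i j : Fin (k + 1) => (DP 2)^[(j : ℕ)] (OmPow i)).map
      (evalOne ℂ) = Matrix.of fun i j : Fin (k + 1) => ((j : ℕ)! : ℂ) * ((j : ℕ) : ℂ) ^ (i : ℕ) := by
    ext i j
    exact (DP_iterate_apply_one 2 j _).trans (by rw [OmPow_prime_pow Nat.prime_two]; rfl)
  rw [← Fin.prod_univ_eq_prod_range (fun j => (j ! : ℂ))]
  calc _ = ((Matrix.of fun i j : Fin (k + 1) => (DP 2)^[(j : ℕ)] (OmPow i)).map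
          (evalOne ℂ)).det := RingHom.map_det (evalOne ℂ) _
    _ = _ := by rw [hentries]; exact Matrix.det_mul_row _ _

/-- The pointwise powers `Ω^⟨0⟩ = 𝟙, Ω^⟨1⟩, Ω^⟨2⟩, …` are linearly independent over `ℂ`;
concretely, the value at `1` of the Wronskian `det (∂_2^j Ω^⟨i⟩)` equals
`(∏ j!) * det (j^i)`, which is nonzero. -/
theorem stmt19 :
    (∀ (k : ℕ) (c : Fin (k + 1) → ℂ), (∑ i, CC (c i) * OmPow (i : ℕ)) = 0 → ∀ i, c i = 0) ∧
    (∀ k : ℕ,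
      (Matrix.det (Matrix.of fun i j : Fin (k + 1) => (DP 2)^[(j : ℕ)] (OmPow (i : ℕ)))) 1
        = (∏ j ∈ Finset.range (k + 1), (Nat.factorial j : ℂ)) *
            Matrix.det (Matrix.of fun i j : Fin (k + 1) => ((j : ℕ) : ℂ) ^ (i : ℕ)) ∧
      (Matrix.det (Matrix.of fun i j : Fin (k + 1) => (DP 2)^[(j : ℕ)] (OmPow (i : ℕ)))) 1 ≠ 0) := by
  refine ⟨fun k c h => congrFun (eq_zero_of_sum_CC_mul_OmPow_eq_zero h), fun k => ?_⟩
  refine ⟨wronskian_OmPow_apply_one k, ?_⟩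
  rw [wronskian_OmPow_apply_one]
  exact mul_ne_zero
    (Finset.prod_ne_zero_iff.mpr fun j _ => Nat.cast_ne_zero.mpr j.factorial_ne_zero)
    (det_of_natCast_pow_ne_zero ℂ (k + 1))
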